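/- Let n ≤ m be integers, let U_n, …, U_m ⊂ ℂ be nonempty compact sets and let A ∈ ΨE(U_n,…,U_m). Then N(A) = ⋃_{B ∈ M(U_n,…,U_m)} N(B). -/

import Mathlib

noncomputable section
open Filter Complex Topology
open scoped ENNReal

/-- The Hilbert space ℓ²(ℤ). -/
abbrev HZ := lp (fun _ : ℤ => ℂ) 2

/-- The standard orthonormal basis of ℓ²(ℤ). -/
def eZ (i : ℤ) : HZ := lp.single 2 i 1

/-- Matrix entry `A_{i,j} = ⟨A e_j, e_i⟩` (inner product linear in the first slot,
here written in Mathlib's convention which is conjugate-linear in the first slot). -/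
def entry (A : HZ →L[ℂ] HZ) (i j : ℤ) : ℂ := inner ℂ (eZ i) (A (eZ j))

/-- The (closed) numerical range `N(A) = clos {⟨Ax,x⟩ : ‖x‖ = 1}`. -/
def numRange (A : HZ →L[ℂ] HZ) : Set ℂ :=
  closure {z | ∃ x : HZ, ‖x‖ = 1 ∧ (inner ℂ x (A x) : ℂ) = z}

/-- The numerical abscissa `r₀(A) = max {Re z : z ∈ N(A)}`. -/
def r0 (A : HZ →L[ℂ] HZ) : ℝ := sSup (Complex.re '' numRange A)

/-- The rotated numerical abscissa `r_φ(A) = max {Re z : z ∈ N(e^{iφ}A)}`. -/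
def rphi (φ : ℝ) (A : HZ →L[ℂ] HZ) : ℝ := r0 (Complex.exp (φ * Complex.I) • A)

lemma memShift (k : ℤ) (x : HZ) : Memℓp (fun j => x (j - k)) 2 := by
  have h := lp.memℓp x
  rw [memℓp_gen_iff (by norm_num)] at h ⊢
  simpa [Function.comp_def] using ((Equiv.subRight k).summable_iff (f := fun i => ‖x i‖ ^ (2:ℝ≥0∞).toReal)).mpr h

def shiftLM (k : ℤ) : HZ →ₗ[ℂ] HZ where
  toFun x := ⟨fun j => x (j - k), memShift k x⟩
  map_add' x y := by ext j; simp [lp.coeFn_add] <;> rfl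
  map_smul' c x := by ext j; simp [lp.coeFn_smul]

lemma shift_norm (k : ℤ) (x : HZ) : ‖shiftLM k x‖ = ‖x‖ := by
  rw [lp.norm_eq_tsum_rpow (by norm_num) x, lp.norm_eq_tsum_rpow (by norm_num) (shiftLM k x)]
  congr 1
  exact (Equiv.subRight k).tsum_eq (f := fun i => ‖x i‖ ^ (2:ℝ≥0∞).toReal)

/-- The shift operator `V_k` on ℓ²(ℤ), `(V_k x)_j = x_{j-k}`. -/
def Vshift (k : ℤ) : HZ →L[ℂ] HZ :=
  LinearIsometry.toContinuousLinearMap ⟨shiftLM k, shift_norm k⟩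

/-- `B` is a limit operator of `A`: there is a sequence of integers `h` with `|h m| → ∞`
such that `V_{-h_m} A V_{h_m} → B` strongly. -/
def IsLimOp (A B : HZ →L[ℂ] HZ) : Prop :=
  ∃ h : ℕ → ℤ, Tendsto (fun m => |h m|) atTop atTop ∧
    ∀ x : HZ, Tendsto (fun m => Vshift (-(h m)) (A (Vshift (h m) x))) atTop (𝓝 (B x))

/-- The operator spectrum: the set of all limit operators of `A`. -/
def opSpec (A : HZ →L[ℂ] HZ) : Set (HZ →L[ℂ] HZ) := {B | IsLimOp A B}

/-- A band operator: only finitely many diagonals are nonzero. -/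
def IsBandOp (A : HZ →L[ℂ] HZ) : Prop :=
  ∃ N : ℕ, ∀ i j : ℤ, (N : ℤ) < |i - j| → entry A i j = 0

/-- `M(U_n, …, U_m)`: the k-th diagonal has entries in `U k` for `n ≤ k ≤ m`,
and all other diagonals vanish. -/
def Mset (n m : ℤ) (U : ℤ → Set ℂ) : Set (HZ →L[ℂ] HZ) :=
  {A | ∀ i k : ℤ, (n ≤ k → k ≤ m → entry A (i + k) i ∈ U k) ∧
      (¬(n ≤ k ∧ k ≤ m) → entry A (i + k) i = 0)}

/-- The orthogonal projection `P_{k,l}` onto `span{e_k, …, e_l}`. -/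
def projIcc (k l : ℤ) : HZ →L[ℂ] HZ :=
  ∑ i ∈ Finset.Icc k l, (innerSL ℂ (eZ i)).smulRight (eZ i)

/-- The finite matrix `b` placed in `ℓ²(ℤ)` with rows/columns at positions `k, …, k+s`. -/
def embedMat (k : ℤ) (s : ℕ) (b : Fin (s+1) → Fin (s+1) → ℂ) : HZ →L[ℂ] HZ :=
  ∑ p : Fin (s+1), ∑ q : Fin (s+1),
    b p q • (innerSL ℂ (eZ (k + (q : ℤ)))).smulRight (eZ (k + (p : ℤ)))

/-- A finite square matrix whose k-th diagonal entries lie in `U k` for `n ≤ k ≤ m`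
and whose remaining entries vanish. -/
def finPattern (n m : ℤ) (U : ℤ → Set ℂ) (s : ℕ) (b : Fin (s+1) → Fin (s+1) → ℂ) : Prop :=
  ∀ p q : Fin (s+1), (n ≤ (p : ℤ) - (q : ℤ) → (p : ℤ) - (q : ℤ) ≤ m →
      b p q ∈ U ((p : ℤ) - (q : ℤ))) ∧
    (¬(n ≤ (p : ℤ) - (q : ℤ) ∧ (p : ℤ) - (q : ℤ) ≤ m) → b p q = 0)

/-- Pseudo-ergodic operators `ΨE(U_n, …, U_m)`. -/
def PsiE (n m : ℤ) (U : ℤ → Set ℂ) : Set (HZ →L[ℂ] HZ) :=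
  {A | A ∈ Mset n m U ∧ ∀ ε > (0:ℝ), ∀ (s : ℕ) (b : Fin (s+1) → Fin (s+1) → ℂ),
    finPattern n m U s b → ∃ k : ℤ,
      ‖projIcc k (k + s) ∘L A ∘L projIcc k (k + s) - embedMat k s b‖ ≤ ε}

/-- The essential spectrum: the set of `λ` such that `A - λI` is not Fredholm. -/
def essSpec (A : HZ →L[ℂ] HZ) : Set ℂ :=
  {lam | ¬(FiniteDimensional ℂ (LinearMap.ker ((A - lam • (1 : HZ →L[ℂ] HZ) : HZ →L[ℂ] HZ) : HZ →ₗ[ℂ] HZ)) ∧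
      FiniteDimensional ℂ ((LinearMap.range ((A - lam • (1 : HZ →L[ℂ] HZ) : HZ →L[ℂ] HZ) : HZ →ₗ[ℂ] HZ))ᗮ))}

/-- The Hilbert space ℓ²(ℕ). -/
abbrev HN := lp (fun _ : ℕ => ℂ) 2

def eN (i : ℕ) : HN := lp.single 2 i 1

def entryN (A : HN →L[ℂ] HN) (i j : ℕ) : ℂ := inner ℂ (eN i) (A (eN j))

def numRangeN (A : HN →L[ℂ] HN) : Set ℂ :=
  closure {z | ∃ x : HN, ‖x‖ = 1 ∧ (inner ℂ x (A x) : ℂ) = z}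

def r0N (A : HN →L[ℂ] HN) : ℝ := sSup (Complex.re '' numRangeN A)


/-! Every `B ∈ M(U_n,…,U_m)` has `N(B) ⊆ N(A)`: a finitely supported unit vector `x` only sees a
finite window of `B`, and pseudo-ergodicity places an approximate copy of that window inside `A`,
so shifting `x` onto it gives `⟨y, A y⟩ ≈ ⟨x, B x⟩`. Finitely supported unit vectors are dense in
the unit sphere, and `N(A)` is closed. -/

section Normalize

variable {𝕜 E ι : Type*} [RCLike 𝕜] [NormedAddCommGroup E] [NormedSpace 𝕜 E] {l : Filter ι}
  {v : ι → E} {x : E}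

theorem Filter.Tendsto.inv_norm_smul (hv : Tendsto v l (𝓝 x)) (hx : ‖x‖ = 1) :
    Tendsto (fun i => (‖v i‖ : 𝕜)⁻¹ • v i) l (𝓝 x) := by
  have hnorm : Tendsto (fun i => (‖v i‖ : 𝕜)) l (𝓝 1) := by
    simpa [hx, Function.comp_def] using ((RCLike.continuous_ofReal (K := 𝕜)).tendsto _).comp hv.norm
  simpa using (hnorm.inv₀ one_ne_zero).smul hv

theorem Filter.Tendsto.eventually_norm_inv_norm_smul (hv : Tendsto v l (𝓝 x)) (hx : ‖x‖ = 1) :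
    ∀ᶠ i in l, ‖(‖v i‖ : 𝕜)⁻¹ • v i‖ = 1 := by
  have hx0 : x ≠ 0 := by rintro rfl; simp at hx
  filter_upwards [hv.eventually_ne hx0] with i hi
  exact norm_smul_inv_norm hi

end Normalize

theorem norm_inner_apply_le_opNorm {𝕜 E : Type*} [RCLike 𝕜] [NormedAddCommGroup E]
    [InnerProductSpace 𝕜 E] {x : E} (hx : ‖x‖ = 1) (T : E →L[𝕜] E) :
    ‖(inner 𝕜 x (T x) : 𝕜)‖ ≤ ‖T‖ :=
  calc ‖(inner 𝕜 x (T x) : 𝕜)‖ ≤ ‖x‖ * (‖T‖ * ‖x‖) :=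
        (norm_inner_le_norm _ _).trans (mul_le_mul_of_nonneg_left (T.le_opNorm x) (norm_nonneg _))
    _ = ‖T‖ := by rw [hx, one_mul, mul_one]

theorem Finset.exists_subset_Icc_add (S : Finset ℤ) :
    ∃ (k : ℤ) (s : ℕ), S ⊆ Finset.Icc k (k + s) := by
  obtain ⟨N, hN⟩ := S.bddAbove
  obtain ⟨M, hM⟩ := S.bddBelow
  refine ⟨M, (N - M).toNat, fun a ha => ?_⟩
  have := hN ha
  have := hM ha
  simp only [Finset.mem_Icc]
  omega

theorem Finset.sum_fin_eq_sum_Icc {M : Type*} [AddCommMonoid M] (k : ℤ) (s : ℕ) (f : ℤ → M) :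
    ∑ p : Fin (s + 1), f (k + p) = ∑ i ∈ Finset.Icc k (k + s), f i := by
  refine Finset.sum_bij' (fun p _ => k + (p : ℤ))
      (fun a ha => (⟨(a - k).toNat, by simp only [Finset.mem_Icc] at ha; omega⟩ : Fin (s + 1)))
      ?_ ?_ ?_ ?_ ?_
  · intro a _; simp only [Finset.mem_Icc]; omega
  · intro a _; exact Finset.mem_univ _
  · intro a _; ext; simp
  · intro a ha; simp only [Finset.mem_Icc] at ha; simp; omega
  · intro a _; rfl

theorem inner_eZ_left (i : ℤ) (x : HZ) : (inner ℂ (eZ i) x : ℂ) = x i := by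
  simp [eZ, lp.inner_single_left]

theorem inner_eZ_right (i : ℤ) (x : HZ) : (inner ℂ x (eZ i) : ℂ) = starRingEnd ℂ (x i) := by
  simp [eZ, lp.inner_single_right]

theorem hasSum_smul_eZ (x : HZ) : HasSum (fun i => x i • eZ i) x := by
  refine (lp.hasSum_single (E := fun _ : ℤ => ℂ) (by norm_num) x).congr_fun fun i => ?_
  rw [eZ, ← lp.single_smul, smul_eq_mul, mul_one]

theorem sum_smul_eZ_apply_of_notMem {S : Finset ℤ} (g : ℤ → ℂ) {j : ℤ} (hj : j ∉ S) :
    (∑ i ∈ S, g i • eZ i) j = 0 := by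
  rw [lp.coeFn_sum, Finset.sum_apply]
  refine Finset.sum_eq_zero fun i hi => ?_
  simp [lp.coeFn_smul, eZ, lp.single_apply, show i ≠ j by rintro rfl; exact hj hi]

theorem eq_sum_smul_eZ_of_support {S : Finset ℤ} {x : HZ} (hx : ∀ j ∉ S, x j = 0) :
    x = ∑ i ∈ S, x i • eZ i :=
  (hasSum_smul_eZ x).unique (hasSum_sum_of_ne_finset_zero fun j hj => by simp [hx j hj])

theorem Vshift_apply (t : ℤ) (x : HZ) (j : ℤ) : Vshift t x j = x (j - t) := rfl

theorem norm_Vshift (t : ℤ) (x : HZ) : ‖Vshift t x‖ = ‖x‖ := shift_norm t x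

theorem projIcc_apply (k l : ℤ) (x : HZ) : projIcc k l x = ∑ i ∈ Finset.Icc k l, x i • eZ i := by
  simp only [projIcc, sum_apply, ContinuousLinearMap.smulRight_apply, innerSL_apply_apply,
    inner_eZ_left]

theorem projIcc_apply_of_support {k l : ℤ} {x : HZ} (hx : ∀ j ∉ Finset.Icc k l, x j = 0) :
    projIcc k l x = x := by
  rw [projIcc_apply, ← eq_sum_smul_eZ_of_support hx]

theorem inner_projIcc_right (k l : ℤ) (u v : HZ) :
    (inner ℂ u (projIcc k l v) : ℂ) = inner ℂ (projIcc k l u) v := by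
  rw [projIcc_apply, projIcc_apply, inner_sum, sum_inner]
  refine Finset.sum_congr rfl fun i _ => ?_
  rw [inner_smul_right, inner_smul_left, inner_eZ_right, inner_eZ_left, mul_comm]

theorem inner_compression_apply_of_support {k l : ℤ} {x : HZ}
    (hx : ∀ j ∉ Finset.Icc k l, x j = 0) (A : HZ →L[ℂ] HZ) :
    (inner ℂ x ((projIcc k l ∘L A ∘L projIcc k l) x) : ℂ) = inner ℂ x (A x) := by
  rw [ContinuousLinearMap.comp_apply, ContinuousLinearMap.comp_apply,
    projIcc_apply_of_support hx, inner_projIcc_right, projIcc_apply_of_support hx]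

theorem inner_apply_eq_sum_entry {k : ℤ} {s : ℕ} {x : HZ}
    (hx : ∀ j ∉ Finset.Icc k (k + s), x j = 0) (B : HZ →L[ℂ] HZ) :
    (inner ℂ x (B x) : ℂ) = ∑ p : Fin (s + 1), ∑ q : Fin (s + 1),
      starRingEnd ℂ (x (k + p)) * entry B (k + p) (k + q) * x (k + q) := by
  conv_lhs => rw [eq_sum_smul_eZ_of_support hx]
  simp only [map_sum, map_smul, sum_inner, inner_sum, inner_smul_left, inner_smul_right,
    ← Finset.sum_fin_eq_sum_Icc k s, Finset.mul_sum]
  rw [Finset.sum_comm]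
  refine Finset.sum_congr rfl fun p _ => Finset.sum_congr rfl fun q _ => ?_
  rw [entry]
  ring

theorem inner_embedMat_apply (k : ℤ) (s : ℕ) (b : Fin (s + 1) → Fin (s + 1) → ℂ) (y : HZ) :
    (inner ℂ y (embedMat k s b y) : ℂ) = ∑ p : Fin (s + 1), ∑ q : Fin (s + 1),
      starRingEnd ℂ (y (k + p)) * b p q * y (k + q) := by
  simp only [embedMat, sum_apply, smul_apply, ContinuousLinearMap.smulRight_apply,
    innerSL_apply_apply, inner_sum, inner_smul_right, inner_eZ_left, inner_eZ_right]
  refine Finset.sum_congr rfl fun p _ => Finset.sum_congr rfl fun q _ => ?_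
  ring

def window (B : HZ →L[ℂ] HZ) (k : ℤ) (s : ℕ) : Fin (s + 1) → Fin (s + 1) → ℂ :=
  fun p q => entry B (k + p) (k + q)

theorem finPattern_window {n m : ℤ} {U : ℤ → Set ℂ} {B : HZ →L[ℂ] HZ} (hB : B ∈ Mset n m U)
    (k : ℤ) (s : ℕ) : finPattern n m U s (window B k s) := by
  intro p q
  have hpq : k + q + ((p : ℤ) - q) = k + p := by ring
  simpa only [window, hpq] using hB (k + q) ((p : ℤ) - q)

section PseudoErgodic

variable {n m : ℤ} {U : ℤ → Set ℂ} {A B : HZ →L[ℂ] HZ}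

theorem inner_apply_mem_numRange_of_support (hA : A ∈ PsiE n m U) (hB : B ∈ Mset n m U)
    {k : ℤ} {s : ℕ} {x : HZ} (hx : ‖x‖ = 1) (hsupp : ∀ j ∉ Finset.Icc k (k + s), x j = 0) :
    (inner ℂ x (B x) : ℂ) ∈ numRange A := by
  rw [numRange, Metric.mem_closure_iff]
  intro ε hε
  obtain ⟨k', hk'⟩ := hA.2 (ε / 2) (by positivity) s (window B k s) (finPattern_window hB k s)
  set y := Vshift (k' - k) x
  have hy_apply (p : ℤ) : y (k' + p) = x (k + p) := by
    rw [Vshift_apply, show k' + p - (k' - k) = k + p by ring]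
  have hysupp : ∀ j ∉ Finset.Icc k' (k' + s), y j = 0 := fun j hj =>
    hsupp _ (by simp only [Finset.mem_Icc] at hj ⊢; omega)
  have hy : ‖y‖ = 1 := (norm_Vshift _ x).trans hx
  have hBy : (inner ℂ x (B x) : ℂ) = inner ℂ y (embedMat k' s (window B k s) y) := by
    simp only [inner_apply_eq_sum_entry hsupp, inner_embedMat_apply, hy_apply, window]
  refine ⟨_, ⟨y, hy, rfl⟩, ?_⟩
  rw [dist_comm, hBy, ← inner_compression_apply_of_support hysupp A, dist_eq_norm,
    ← inner_sub_right, ← sub_apply]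
  exact (norm_inner_apply_le_opNorm hy _).trans_lt (hk'.trans_lt (half_lt_self hε))

theorem numRange_subset_of_pseudoErgodic (hA : A ∈ PsiE n m U) (hB : B ∈ Mset n m U) :
    numRange B ⊆ numRange A := by
  refine closure_minimal ?_ isClosed_closure
  rintro _ ⟨x, hx, rfl⟩
  set y : Finset ℤ → HZ := fun S => (‖∑ i ∈ S, x i • eZ i‖ : ℂ)⁻¹ • ∑ i ∈ S, x i • eZ i
  have hlim : Tendsto y atTop (𝓝 x) := (hasSum_smul_eZ x).inv_norm_smul hx
  have hcont : Continuous fun v : HZ => (inner ℂ v (B v) : ℂ) := continuous_id.inner B.continuous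
  refine isClosed_closure.mem_of_tendsto ((hcont.tendsto x).comp hlim) ?_
  filter_upwards [(hasSum_smul_eZ x).eventually_norm_inv_norm_smul (𝕜 := ℂ) hx] with S hS
  obtain ⟨k, s, hks⟩ := S.exists_subset_Icc_add
  refine inner_apply_mem_numRange_of_support hA hB hS (k := k) (s := s) fun j hj => ?_
  rw [lp.coeFn_smul, Pi.smul_apply, sum_smul_eZ_apply_of_notMem _ fun h => hj (hks h), smul_zero]

end PseudoErgodic

theorem numRange_eq_iUnion_of_pseudoErgodic_general
    (n m : ℤ) (U : ℤ → Set ℂ)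
    (A : HZ →L[ℂ] HZ) (hA : A ∈ PsiE n m U) :
    numRange A = ⋃ B ∈ Mset n m U, numRange B :=
  (Set.subset_iUnion₂ (s := fun B _ => numRange B) A hA.1).antisymm
    (Set.iUnion₂_subset fun _ hB => numRange_subset_of_pseudoErgodic hA hB)

/-- For pseudo-ergodic `A`, `N(A) = ⋃_{B ∈ M(U_n,…,U_m)} N(B)`. -/
theorem numRange_eq_iUnion_of_pseudoErgodic
    (n m : ℤ) (hnm : n ≤ m) (U : ℤ → Set ℂ)
    (hU : ∀ k : ℤ, n ≤ k → k ≤ m → (U k).Nonempty ∧ IsCompact (U k))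
    (A : HZ →L[ℂ] HZ) (hA : A ∈ PsiE n m U) :
    numRange A = ⋃ B ∈ Mset n m U, numRange B :=
  numRange_eq_iUnion_of_pseudoErgodic_general n m U A hA
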